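/- Corollary 1 (eigenstructure and single-exponential decay for equal leakage parameters): let n ≥ 1, p̄ > 0 and q̄ ≥ 0 be reals, and let Q := Q(p,q) with p_i = p̄ and q_i = q̄ for all i. Then: (i) Q w = w for w = (2q̄, p̄, p̄, …, p̄); (ii) Q v = (1 − 2q̄ − n p̄) v for v = (−n, 1, 1, …, 1); (iii) Q u = (1 − 2q̄) u for every vector u = (u_0, u_1, …, u_n) with u_0 = 0 and ∑_{i=1}^n u_i = 0; (iv) for every integer m ≥ 0, Q^m e_0 = (1/(2q̄ + n p̄)) · (w − p̄ · (1 − 2q̄ − n p̄)^m · v), where e_0 = (1, 0, …, 0). In particular every entry of Q^m e_0 has the form A + B·(1 − 2q̄ − n p̄)^m with A, B independent of m. -/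
import Mathlib


open Matrix Finset

noncomputable section

/-- The (n+1)×(n+1) single-site leakage transition matrix Q(p,q): rows and columns
indexed by 0,1,…,n, with Q₀₀ = 1 − ∑ᵢ pᵢ, Q₀ᵢ = 2qᵢ, Qᵢ₀ = pᵢ, Qᵢᵢ = 1 − 2qᵢ and
Qᵢⱼ = 0 for distinct i, j ≥ 1. -/
def Qmat {n : ℕ} (p q : Fin n → ℝ) : Matrix (Fin (n + 1)) (Fin (n + 1)) ℝ :=
  Matrix.of fun a b =>
    Fin.cases (motive := fun _ => ℝ)
      (Fin.cases (motive := fun _ => ℝ) (1 - ∑ i, p i) (fun j => 2 * q j) b)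
      (fun i =>
        Fin.cases (motive := fun _ => ℝ) (p i)
          (fun j => if i = j then 1 - 2 * q i else 0) b)
      a

/-- The vector w = (2q̄, p̄, p̄, …, p̄). -/
def wVec (n : ℕ) (pbar qbar : ℝ) : Fin (n + 1) → ℝ :=
  Fin.cons (2 * qbar) fun _ => pbar

/-- The vector v = (−n, 1, 1, …, 1). -/
def vVec (n : ℕ) : Fin (n + 1) → ℝ :=
  Fin.cons (-(n : ℝ)) fun _ => 1

/-- The vector e₀ = (1, 0, …, 0). -/
def e0Vec (n : ℕ) : Fin (n + 1) → ℝ :=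
  Fin.cons 1 fun _ => 0

lemma Qmul {n : ℕ} (p q : Fin n → ℝ) (u : Fin (n + 1) → ℝ) :
    (Qmat p q).mulVec u =
      Fin.cons ((1 - ∑ i, p i) * u 0 + ∑ j, 2 * q j * u j.succ)
        (fun i => p i * u 0 + (1 - 2 * q i) * u i.succ) := by
  funext a
  induction a using Fin.cases with
  | zero =>
    simp [Qmat, mulVec, dotProduct, Fin.sum_univ_succ]
  | succ i =>
    simp only [Qmat, mulVec, dotProduct, Fin.sum_univ_succ, Matrix.of_apply,
      Fin.cases_zero, Fin.cases_succ, Fin.cons_succ, Fin.cons_zero]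
    congr 1
    rw [Finset.sum_eq_single i]
    · simp
    · intro b _ hb; simp [Ne.symm hb]
    · simp

/-- Corollary 1 (eigenstructure and single-exponential decay for equal leakage
parameters p̄, q̄). -/
theorem equal_leakage_eigenstructure (n : ℕ) (hn : 1 ≤ n) (pbar qbar : ℝ)
    (hp : 0 < pbar) (hq : 0 ≤ qbar) :
    (Qmat (fun _ : Fin n => pbar) (fun _ => qbar)).mulVec (wVec n pbar qbar) =
        wVec n pbar qbar ∧
      (Qmat (fun _ : Fin n => pbar) (fun _ => qbar)).mulVec (vVec n) =
        (1 - 2 * qbar - n * pbar) • vVec n ∧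
      (∀ u : Fin (n + 1) → ℝ, u 0 = 0 → (∑ i : Fin n, u i.succ) = 0 →
        (Qmat (fun _ : Fin n => pbar) (fun _ => qbar)).mulVec u =
          (1 - 2 * qbar) • u) ∧
      (∀ m : ℕ,
        ((Qmat (fun _ : Fin n => pbar) (fun _ => qbar)) ^ m).mulVec (e0Vec n) =
          (1 / (2 * qbar + n * pbar)) •
            (wVec n pbar qbar -
              (pbar * (1 - 2 * qbar - n * pbar) ^ m) • vVec n)) ∧
      (∀ k : Fin (n + 1), ∃ A B : ℝ, ∀ m : ℕ,
        ((Qmat (fun _ : Fin n => pbar) (fun _ => qbar)) ^ m).mulVec (e0Vec n) k =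
          A + B * (1 - 2 * qbar - n * pbar) ^ m) := by
  set Q := Qmat (fun _ : Fin n => pbar) (fun _ => qbar) with hQ
  have hs : (2 * qbar + n * pbar) ≠ 0 := by
    have : (1 : ℝ) ≤ (n : ℝ) := by exact_mod_cast hn
    nlinarith
  have hw : Q.mulVec (wVec n pbar qbar) = wVec n pbar qbar := by
    rw [hQ, Qmul]
    funext a
    induction a using Fin.cases with
    | zero => simp [wVec]; ring
    | succ i => simp [wVec]; ring
  have hv : Q.mulVec (vVec n) = (1 - 2 * qbar - n * pbar) • vVec n := by
    rw [hQ, Qmul]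
    funext a
    induction a using Fin.cases with
    | zero => simp [vVec]; ring
    | succ i => simp [vVec]; ring
  have h4 : ∀ m : ℕ, (Q ^ m).mulVec (e0Vec n) =
      (1 / (2 * qbar + n * pbar)) •
        (wVec n pbar qbar - (pbar * (1 - 2 * qbar - n * pbar) ^ m) • vVec n) := by
    intro m
    induction m with
    | zero =>
      rw [pow_zero, Matrix.one_mulVec]
      funext a
      induction a using Fin.cases with
      | zero =>
        simp only [e0Vec, wVec, vVec, Fin.cons_zero, Pi.smul_apply, Pi.sub_apply,
          smul_eq_mul, pow_zero, mul_one]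
        field_simp
        ring
      | succ i =>
        simp only [e0Vec, wVec, vVec, Fin.cons_succ, Pi.smul_apply, Pi.sub_apply,
          smul_eq_mul, pow_zero, mul_one]
        ring
    | succ m ih =>
      rw [pow_succ', ← Matrix.mulVec_mulVec, ih, Matrix.mulVec_smul,
        Matrix.mulVec_sub, hw, Matrix.mulVec_smul, hv, smul_smul]
      congr 2
      ring
  refine ⟨hw, hv, ?_, h4, ?_⟩
  · intro u hu0 husum
    rw [hQ, Qmul]
    funext a
    induction a using Fin.cases with
    | zero =>
      simp only [Fin.cons_zero, hu0, Pi.smul_apply, smul_eq_mul, mul_zero]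
      rw [← Finset.mul_sum] at *
      simp [husum, hu0]
    | succ i => simp [hu0]
  · intro k
    refine ⟨(1 / (2 * qbar + n * pbar)) * wVec n pbar qbar k,
      -((1 / (2 * qbar + n * pbar)) * pbar * vVec n k), fun m => ?_⟩
    rw [h4 m]
    simp only [Pi.smul_apply, Pi.sub_apply, smul_eq_mul]
    ring
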